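/- arXiv:1210.3299 — 4 statements merged into one kernel-verified Lean document; each statement's English description precedes it below -/
import Mathlib

section
/- Let p be a prime and let k₀, D be positive integers with k₀ ≥ 2·ord_p(2D). Let A₁, …, Aₙ ∈ GL₂(ℚ_p). Then there exist α, β ∈ ℚ_p^× and e ∈ ℤ such that the matrices B_i = A_i⁻¹ · diag(p^{−e}α^D, p^{−e}β^D) · A_i (for 1 ≤ i ≤ n) satisfy: (i) every B_i has all entries in ℤ_p, and there exists an index i such that B_i ∉ p·M₂(ℤ_p) (i.e. some entry of B_i is a p-adic unit); (ii) k₀ ≤ ord_p(p^{−2e}α^Dβ^D) ≤ 3Dk₀. -/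
/-!
Put `C i = (A i)⁻¹ * diag(1, 0) * A i`. Then `B i = b • 1 + (a - b) • C i` with
`a = p^(-e) α^D` and `b = p^(-e) β^D`, and since `C i` has trace `1`, the largest entry of all the
`C i` has norm `p^m` for some `m ≥ 0`. So it suffices to choose `α, β, e` with `‖a - b‖ = p^(-m)`
and `‖b‖ < 1`. If `m ≤ D k₀`, take `α = 1`, `β = p^k₀`, `e = -m`. Otherwise take `α = 1`,
`β = 1 + p^w`, `e = -k₀`: since `‖(1 + p^w)^D - 1‖ = ‖D‖ p^(-w)` once `w > ord_p D`, the choice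
`w = m - k₀ - ord_p D` works, and `w > ord_p D` is where `2 ord_p(2D) ≤ k₀` enters.
-/

section Ultrametric

variable {E : Type*} [SeminormedAddGroup E] [IsUltrametricDist E] {x y : E}

lemma norm_add_eq_left_of_norm_lt (h : ‖y‖ < ‖x‖) : ‖x + y‖ = ‖x‖ := by
  rw [IsUltrametricDist.norm_add_eq_max_of_norm_ne_norm h.ne', max_eq_left h.le]

lemma norm_sub_eq_left_of_norm_lt (h : ‖y‖ < ‖x‖) : ‖x - y‖ = ‖x‖ := by
  rw [sub_eq_add_neg]
  exact norm_add_eq_left_of_norm_lt (by rwa [norm_neg])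

lemma norm_one_add_pow_sub_one_sub_le {R : Type*} [NormedCommRing R] [NormOneClass R]
    [IsUltrametricDist R] {x : R} (hx : ‖x‖ ≤ 1) (D : ℕ) :
    ‖(1 + x) ^ D - 1 - D * x‖ ≤ ‖x‖ ^ 2 := by
  induction D with
  | zero => simp
  | succ D ih =>
    have h1x : ‖1 + x‖ ≤ 1 := (IsUltrametricDist.norm_add_le_max _ _).trans (by simp [hx])
    have hsplit : (1 + x) ^ (D + 1) - 1 - (D + 1 : ℕ) * x
        = (1 + x) * ((1 + x) ^ D - 1 - D * x) + D * x ^ 2 := by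
      push_cast; ring
    rw [hsplit]
    refine (IsUltrametricDist.norm_add_le_max _ _).trans (max_le ?_ ?_)
    · calc _ ≤ ‖1 + x‖ * ‖(1 + x) ^ D - 1 - D * x‖ := norm_mul_le _ _
        _ ≤ 1 * ‖x‖ ^ 2 := by gcongr
        _ = ‖x‖ ^ 2 := one_mul _
    · calc _ ≤ ‖(D : R)‖ * ‖x ^ 2‖ := norm_mul_le _ _
        _ ≤ 1 * ‖x‖ ^ 2 := by
          gcongr
          exacts [IsUltrametricDist.norm_natCast_le_one R D, norm_pow_le _ _]
        _ = ‖x‖ ^ 2 := one_mul _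

lemma norm_one_add_pow_sub_one {K : Type*} [NormedField K] [IsUltrametricDist K] {x : K}
    (hx : ‖x‖ ≤ 1) {D : ℕ} (hxD : ‖x‖ < ‖(D : K)‖) :
    ‖(1 + x) ^ D - 1‖ = ‖(D : K)‖ * ‖x‖ := by
  rcases eq_or_ne x 0 with rfl | hx0
  · simp
  have hrest : ‖(1 + x) ^ D - 1 - D * x‖ < ‖D * x‖ := by
    calc _ ≤ ‖x‖ ^ 2 := norm_one_add_pow_sub_one_sub_le hx D
      _ < ‖(D : K)‖ * ‖x‖ := by rw [sq]; gcongr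
      _ = ‖D * x‖ := (norm_mul _ _).symm
  rw [← add_sub_cancel (D * x : K) ((1 + x) ^ D - 1), norm_add_eq_left_of_norm_lt hrest,
    norm_mul]

end Ultrametric

namespace Matrix

section CommRing

variable {R : Type*} [CommRing R] (A : GL (Fin 2) R)

lemma units_conj_diagonal_fin_two (a b : R) :
    (↑A⁻¹ : Matrix (Fin 2) (Fin 2) R) * diagonal ![a, b] * (A : Matrix (Fin 2) (Fin 2) R)
      = b • 1 + (a - b) •
        ((↑A⁻¹ : Matrix (Fin 2) (Fin 2) R) * diagonal ![1, 0] *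
          (A : Matrix (Fin 2) (Fin 2) R)) := by
  have hdiag : diagonal ![a, b]
      = b • (1 : Matrix (Fin 2) (Fin 2) R) + (a - b) • diagonal ![1, 0] := by
    ext i j
    fin_cases i <;> fin_cases j <;> simp
  rw [hdiag, Matrix.mul_add, Matrix.add_mul, Matrix.mul_smul, Matrix.smul_mul, Matrix.mul_one,
    Units.inv_mul, Matrix.mul_smul, Matrix.smul_mul]

lemma trace_units_conj_diagonal_one_zero :
    trace ((↑A⁻¹ : Matrix (Fin 2) (Fin 2) R) * diagonal ![1, 0] *
      (A : Matrix (Fin 2) (Fin 2) R)) = 1 := by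
  rw [trace_units_conj', trace_diagonal, Fin.sum_univ_two]
  simp

end CommRing

variable {K : Type*} [NormedField K] {m ι : Type*} [DecidableEq m]

lemma norm_one_apply_le (i j : m) : ‖(1 : Matrix m m K) i j‖ ≤ 1 := by
  rw [one_apply]; split_ifs <;> simp

variable [IsUltrametricDist K]

lemma one_le_of_trace_eq_one {M : Matrix (Fin 2) (Fin 2) K} (htr : trace M = 1) {c : ℝ}
    (hc : ∀ j k, ‖M j k‖ ≤ c) : 1 ≤ c := by
  rw [trace_fin_two] at htr
  calc (1 : ℝ) = ‖M 0 0 + M 1 1‖ := by rw [htr, norm_one]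
    _ ≤ max ‖M 0 0‖ ‖M 1 1‖ := IsUltrametricDist.norm_add_le_max _ _
    _ ≤ c := max_le (hc 0 0) (hc 1 1)

variable {C : ι → Matrix m m K} {i₀ : ι} {j₀ l₀ : m} {a b : K}

lemma norm_smul_one_add_smul_apply_le_one (hmax : ∀ i j l, ‖C i j l‖ ≤ ‖C i₀ j₀ l₀‖)
    (hab : ‖a - b‖ * ‖C i₀ j₀ l₀‖ = 1) (hb : ‖b‖ ≤ 1) (i : ι) (j l : m) :
    ‖(b • 1 + (a - b) • C i) j l‖ ≤ 1 := by
  rw [add_apply, smul_apply, smul_apply, smul_eq_mul, smul_eq_mul]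
  refine (IsUltrametricDist.norm_add_le_max _ _).trans (max_le ?_ ?_) <;> rw [norm_mul]
  · exact mul_le_one₀ hb (norm_nonneg _) (norm_one_apply_le j l)
  · exact hab ▸ mul_le_mul_of_nonneg_left (hmax i j l) (norm_nonneg _)

lemma norm_smul_one_add_smul_apply_eq_one (hab : ‖a - b‖ * ‖C i₀ j₀ l₀‖ = 1) (hb : ‖b‖ < 1) :
    ‖(b • 1 + (a - b) • C i₀) j₀ l₀‖ = 1 := by
  have hsmall : ‖b * (1 : Matrix m m K) j₀ l₀‖ < ‖(a - b) * C i₀ j₀ l₀‖ := by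
    rw [norm_mul, norm_mul, hab]
    exact (mul_le_of_le_one_right (norm_nonneg _) (norm_one_apply_le j₀ l₀)).trans_lt hb
  rw [add_apply, smul_apply, smul_apply, smul_eq_mul, smul_eq_mul, add_comm,
    norm_add_eq_left_of_norm_lt hsmall, norm_mul, hab]

end Matrix

namespace Padic

variable {p : ℕ} [Fact p.Prime]

lemma one_lt_p_real : (1 : ℝ) < p := by exact_mod_cast (Fact.out : p.Prime).one_lt

lemma valuation_p_pow (n : ℕ) : ((p : ℚ_[p]) ^ n).valuation = n := by
  simp [valuation_pow]

lemma valuation_eq_zero_of_norm_eq_one {x : ℚ_[p]} (h : ‖x‖ = 1) : x.valuation = 0 := by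
  have h₁ := (norm_le_one_iff_val_nonneg x).1 h.le
  have h₂ := (norm_le_one_iff_val_nonneg x⁻¹).1 (by rw [norm_inv, h, inv_one])
  rw [valuation_inv] at h₂
  omega

lemma exists_norm_eq_zpow_of_one_le {x : ℚ_[p]} (hx : 1 ≤ ‖x‖) :
    ∃ m : ℕ, ‖x‖ = (p : ℝ) ^ (m : ℤ) := by
  have hx0 : x ≠ 0 := norm_pos_iff.1 (one_pos.trans_le hx)
  rw [norm_eq_zpow_neg_valuation hx0] at hx ⊢
  have hv : 0 ≤ -x.valuation := (one_le_zpow_iff_right₀ one_lt_p_real).1 hx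
  exact ⟨(-x.valuation).toNat, by rw [Int.toNat_of_nonneg hv]⟩

lemma norm_p_pow_lt_one {n : ℕ} (hn : 0 < n) : ‖(p : ℚ_[p]) ^ n‖ < 1 := by
  rw [norm_p_pow, zpow_lt_one_iff_right₀ one_lt_p_real]
  omega

lemma norm_one_add_p_pow_pow_sub_one {D w : ℕ} (hD : D ≠ 0) (hw : padicValNat p D < w) :
    ‖(1 + (p : ℚ_[p]) ^ w) ^ D - 1‖ = (p : ℝ) ^ (-((padicValNat p D + w : ℕ) : ℤ)) := by
  have hDnorm : ‖(D : ℚ_[p])‖ = (p : ℝ) ^ (-(padicValNat p D : ℤ)) := by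
    rw [norm_eq_zpow_neg_valuation (Nat.cast_ne_zero.2 hD), valuation_natCast]
  have hlt : ‖(p : ℚ_[p]) ^ w‖ < ‖(D : ℚ_[p])‖ := by
    rw [norm_p_pow, hDnorm]
    exact zpow_lt_zpow_right₀ one_lt_p_real (by omega)
  rw [norm_one_add_pow_sub_one (norm_p_pow_lt_one (by omega)).le hlt, hDnorm, norm_p_pow,
    ← zpow_add₀ (zero_lt_one.trans one_lt_p_real).ne']
  push_cast
  ring_nf

end Padic

lemma add_two_mul_padicValNat_le {p : ℕ} [Fact p.Prime] {k D : ℕ} (hD : 0 < D)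
    (h : 2 * padicValNat p (2 * D) ≤ k) : k + 2 * padicValNat p D ≤ D * k := by
  rcases (Nat.succ_le_of_lt hD).eq_or_lt with rfl | hD2
  · simp
  · have := padicValNat.mul (p := p) two_ne_zero hD.ne'
    have := Nat.mul_le_mul_right k (Nat.succ_le_of_lt hD2)
    omega

section Scalars

open Padic

variable {p : ℕ} [Fact p.Prime] {k₀ D m : ℕ}

lemma exists_scalars_of_le (hk₀ : 0 < k₀) (hD : 0 < D) (hm : m ≤ D * k₀) :
    ∃ (α β : ℚ_[p]) (e : ℤ), α ≠ 0 ∧ β ≠ 0 ∧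
      ‖(p : ℚ_[p]) ^ (-e) * α ^ D - (p : ℚ_[p]) ^ (-e) * β ^ D‖ = (p : ℝ) ^ (-(m : ℤ)) ∧
      ‖(p : ℚ_[p]) ^ (-e) * β ^ D‖ < 1 ∧
      (k₀ : ℤ) ≤ ((p : ℚ_[p]) ^ (-(2 * e)) * α ^ D * β ^ D).valuation ∧
      ((p : ℚ_[p]) ^ (-(2 * e)) * α ^ D * β ^ D).valuation ≤ 3 * D * k₀ := by
  have hp0 : (p : ℚ_[p]) ≠ 0 := Nat.cast_ne_zero.2 (Fact.out : p.Prime).ne_zero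
  refine ⟨1, (p : ℚ_[p]) ^ k₀, -m, one_ne_zero, pow_ne_zero _ hp0, ?_⟩
  have hα : (p : ℚ_[p]) ^ (-(-(m : ℤ))) * 1 ^ D = p ^ m := by
    rw [neg_neg, zpow_natCast, one_pow, mul_one]
  have hβ : (p : ℚ_[p]) ^ (-(-(m : ℤ))) * ((p : ℚ_[p]) ^ k₀) ^ D = p ^ (m + k₀ * D) := by
    rw [neg_neg, zpow_natCast, ← pow_mul, ← pow_add]
  have hprod : (p : ℚ_[p]) ^ (-(2 * -(m : ℤ))) * 1 ^ D * ((p : ℚ_[p]) ^ k₀) ^ D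
      = p ^ (2 * m + k₀ * D) := by
    rw [neg_mul_eq_mul_neg, neg_neg, one_pow, mul_one, ← pow_mul, ← Nat.cast_ofNat,
      ← Nat.cast_mul, zpow_natCast, ← pow_add]
  have hlt : ‖(p : ℚ_[p]) ^ (m + k₀ * D)‖ < ‖(p : ℚ_[p]) ^ m‖ := by
    rw [norm_p_pow, norm_p_pow]
    exact zpow_lt_zpow_right₀ one_lt_p_real (by push_cast; nlinarith)
  rw [hα, hβ, hprod, valuation_p_pow, norm_sub_eq_left_of_norm_lt hlt, norm_p_pow]
  refine ⟨rfl, norm_p_pow_lt_one (by positivity), ?_, ?_⟩ <;> push_cast <;> nlinarith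

lemma exists_scalars_of_lt (hk₀ : 0 < k₀) (hD : 0 < D) (hk₀D : 2 * padicValNat p (2 * D) ≤ k₀)
    (hm : D * k₀ < m) :
    ∃ (α β : ℚ_[p]) (e : ℤ), α ≠ 0 ∧ β ≠ 0 ∧
      ‖(p : ℚ_[p]) ^ (-e) * α ^ D - (p : ℚ_[p]) ^ (-e) * β ^ D‖ = (p : ℝ) ^ (-(m : ℤ)) ∧
      ‖(p : ℚ_[p]) ^ (-e) * β ^ D‖ < 1 ∧
      (k₀ : ℤ) ≤ ((p : ℚ_[p]) ^ (-(2 * e)) * α ^ D * β ^ D).valuation ∧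
      ((p : ℚ_[p]) ^ (-(2 * e)) * α ^ D * β ^ D).valuation ≤ 3 * D * k₀ := by
  have hc := add_two_mul_padicValNat_le (p := p) hD hk₀D
  set w := m - k₀ - padicValNat p D
  have hβ : ‖1 + (p : ℚ_[p]) ^ w‖ = 1 := by
    rw [norm_add_eq_left_of_norm_lt (by rw [norm_one]; exact norm_p_pow_lt_one (by omega)),
      norm_one]
  have hβD : ‖(1 + (p : ℚ_[p]) ^ w) ^ D‖ = 1 := by rw [norm_pow, hβ, one_pow]
  have hβ0 : 1 + (p : ℚ_[p]) ^ w ≠ 0 := norm_ne_zero_iff.1 (by rw [hβ]; exact one_ne_zero)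
  refine ⟨1, 1 + (p : ℚ_[p]) ^ w, -k₀, one_ne_zero, hβ0, ?_⟩
  have hprod : (p : ℚ_[p]) ^ (-(2 * -(k₀ : ℤ))) * 1 ^ D * (1 + (p : ℚ_[p]) ^ w) ^ D
      = p ^ (2 * k₀) * (1 + (p : ℚ_[p]) ^ w) ^ D := by
    rw [neg_mul_eq_mul_neg, neg_neg, one_pow, mul_one, ← Nat.cast_ofNat, ← Nat.cast_mul,
      zpow_natCast]
  have hval : ((p : ℚ_[p]) ^ (2 * k₀) * (1 + (p : ℚ_[p]) ^ w) ^ D).valuation = 2 * k₀ := by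
    rw [valuation_mul (pow_ne_zero _ (Nat.cast_ne_zero.2 (Fact.out : p.Prime).ne_zero))
      (pow_ne_zero _ hβ0), valuation_p_pow, valuation_eq_zero_of_norm_eq_one hβD]
    push_cast; ring
  rw [hprod, hval, neg_neg, zpow_natCast, one_pow, mul_one, ← mul_one_sub, norm_mul, norm_mul,
    norm_sub_rev, norm_one_add_p_pow_pow_sub_one hD.ne' (by omega), hβD, norm_p_pow, mul_one,
    ← zpow_add₀ (zero_lt_one.trans one_lt_p_real).ne']
  refine ⟨by congr 1; omega, (zpow_lt_one_iff_right₀ one_lt_p_real).2 (by omega), ?_, ?_⟩ <;>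
    nlinarith

end Scalars

/-- Let `p` be a prime and let `k₀, D` be positive integers with `k₀ ≥ 2·ord_p(2D)`.
Let `A₁, …, Aₙ ∈ GL₂(ℚ_p)`.  Then there exist `α, β ∈ ℚ_p^×` and `e ∈ ℤ` such that the
matrices `B_i = A_i⁻¹ · diag(p^{−e}α^D, p^{−e}β^D) · A_i` satisfy:
(i) every `B_i` has all entries in `ℤ_p` (i.e. of norm at most `1`) and some entry of some
`B_i` is a `p`-adic unit (i.e. of norm exactly `1`);
(ii) `k₀ ≤ ord_p(p^{−2e}α^Dβ^D) ≤ 3Dk₀`. -/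
theorem stmt_2 (p : ℕ) [Fact p.Prime] (k₀ D : ℕ) (hk₀ : 0 < k₀) (hD : 0 < D)
    (hk₀D : 2 * padicValNat p (2 * D) ≤ k₀)
    (n : ℕ) (hn : 0 < n) (A : Fin n → GL (Fin 2) ℚ_[p]) :
    ∃ (α β : ℚ_[p]) (e : ℤ), α ≠ 0 ∧ β ≠ 0 ∧
      (∀ B : Fin n → Matrix (Fin 2) (Fin 2) ℚ_[p],
        (∀ i, B i = (↑(A i)⁻¹ : Matrix (Fin 2) (Fin 2) ℚ_[p]) *
            Matrix.diagonal ![(p : ℚ_[p]) ^ (-e) * α ^ D, (p : ℚ_[p]) ^ (-e) * β ^ D] *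
            (A i : Matrix (Fin 2) (Fin 2) ℚ_[p])) →
          (∀ i j k, ‖B i j k‖ ≤ 1) ∧ (∃ i j k, ‖B i j k‖ = 1)) ∧
      (k₀ : ℤ) ≤ ((p : ℚ_[p]) ^ (-(2 * e)) * α ^ D * β ^ D).valuation ∧
      ((p : ℚ_[p]) ^ (-(2 * e)) * α ^ D * β ^ D).valuation ≤ 3 * D * k₀ := by
  set C : Fin n → Matrix (Fin 2) (Fin 2) ℚ_[p] := fun i =>
    (↑(A i)⁻¹ : Matrix (Fin 2) (Fin 2) ℚ_[p]) * Matrix.diagonal ![1, 0] *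
      (A i : Matrix (Fin 2) (Fin 2) ℚ_[p])
  have : Nonempty (Fin n) := ⟨⟨0, hn⟩⟩
  obtain ⟨⟨i₀, j₀, l₀⟩, hmax⟩ :=
    Finite.exists_max fun t : Fin n × Fin 2 × Fin 2 => ‖C t.1 t.2.1 t.2.2‖
  obtain ⟨m, hm⟩ := Padic.exists_norm_eq_zpow_of_one_le <|
    Matrix.one_le_of_trace_eq_one (Matrix.trace_units_conj_diagonal_one_zero (A i₀))
      fun j l => hmax (i₀, j, l)
  obtain ⟨α, β, e, hα, hβ, hsub, hlt, hlo, hhi⟩ := (le_or_gt m (D * k₀)).elim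
    (exists_scalars_of_le hk₀ hD) (exists_scalars_of_lt hk₀ hD hk₀D)
  refine ⟨α, β, e, hα, hβ, fun B hB => ?_, hlo, hhi⟩
  set a := (p : ℚ_[p]) ^ (-e) * α ^ D
  set b := (p : ℚ_[p]) ^ (-e) * β ^ D
  have hab : ‖a - b‖ * ‖C i₀ j₀ l₀‖ = 1 := by
    rw [hsub, hm, ← zpow_add₀ (zero_lt_one.trans Padic.one_lt_p_real).ne', neg_add_cancel,
      zpow_zero]
  have hB' : ∀ i, B i = b • 1 + (a - b) • C i :=
    fun i => (hB i).trans (Matrix.units_conj_diagonal_fin_two _ _ _)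
  simp only [hB']
  exact ⟨Matrix.norm_smul_one_add_smul_apply_le_one (fun i j l => hmax (i, j, l)) hab hlt.le,
    i₀, j₀, l₀, Matrix.norm_smul_one_add_smul_apply_eq_one hab hlt⟩
end

section
/- Let p be a prime, let Z be a Zariski closed subset of ℂ_p^n and let Z' be a Zariski closed subset of ℂ_p^m. Then: (a) there exists a constant c ≥ 1, depending only on Z and Z', such that for all x ∈ 𝒪_p^n and y ∈ 𝒪_p^m one has dist_p((x,y), Z × Z') ≤ c · max{dist_p(x,Z), dist_p(y,Z')}; and (b) for all x ∈ 𝒪_p^n and y ∈ 𝒪_p^m one has max{dist_p(x,Z), dist_p(y,Z')} ≤ dist_p((x,y), Z × Z'). -/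
/-- A Zariski closed subset of `C^n`: the common zero set of an ideal of polynomials. -/
def IsZariskiClosed {C : Type*} [CommRing C] {n : ℕ} (Z : Set (Fin n → C)) : Prop :=
  ∃ I : Ideal (MvPolynomial (Fin n) C),
    Z = {x | ∀ f ∈ I, MvPolynomial.eval x f = 0}

/-- The `p`-adic distance from a point `x` to a set `Z ⊆ C^n`:
`dist_p(x,Z) = sup {‖f(x)‖ : f vanishes identically on Z and all coefficients of f
have norm at most 1}`. -/
noncomputable def pDist {C : Type*} [NormedField C] {n : ℕ}
    (x : Fin n → C) (Z : Set (Fin n → C)) : ℝ :=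
  sSup {r : ℝ | ∃ f : MvPolynomial (Fin n) C,
    (∀ y ∈ Z, MvPolynomial.eval y f = 0) ∧ (∀ m, ‖f.coeff m‖ ≤ 1) ∧
    r = ‖MvPolynomial.eval x f‖}

/-- The product `Z × Z' ⊆ C^{n+m}` of `Z ⊆ C^n` and `Z' ⊆ C^m`. -/
def setProd {C : Type*} {n m : ℕ} (Z : Set (Fin n → C)) (Z' : Set (Fin m → C)) :
    Set (Fin (n + m) → C) :=
  {z | (fun i => z (Fin.castAdd m i)) ∈ Z ∧ (fun j => z (Fin.natAdd n j)) ∈ Z'}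

/-!
For an integral polynomial `f` vanishing on `Z × Z'`, write `f(x, y) = ∑_β x^β h_β(y)` and let
`c(y) = (h_β(y))_β`. The coefficient vectors of the polynomials in `x` vanishing on `Z` form a
subspace `W`; Gaussian elimination with a pivot of maximal size in each step gives, because the
norm is ultrametric, a projection `Q` along `W` that does not increase the sup norm. Since
`c(b) ∈ W` for `b ∈ Z'`, the coordinates of `Q c(y)` are values at `y` of integral polynomials
vanishing on `Z'`. Splitting `c(y) = (c(y) - Q c(y)) + Q c(y)` therefore bounds `|f(x, y)|` by
`max (dist_p(x, Z)) (dist_p(y, Z'))`, so (a) holds with `c = 1`. Part (b) follows by pulling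
polynomials back along the two projections.
-/

open MvPolynomial

section Ultrametric

variable {K : Type*} [NormedField K] [IsUltrametricDist K]

theorem norm_sub_le_max_of_isUltrametricDist {E : Type*} [SeminormedAddCommGroup E]
    [IsUltrametricDist E] (u v : E) : ‖u - v‖ ≤ max ‖u‖ ‖v‖ := by
  simpa only [dist_eq_norm, sub_zero, zero_sub, norm_neg] using
    IsUltrametricDist.dist_triangle_max u 0 v

theorem exists_contractive_map_lt_of_ne_bot {ι : Type*} [Fintype ι] {W : Submodule K (ι → K)}
    (hW : W ≠ ⊥) :
    ∃ R : (ι → K) →ₗ[K] (ι → K), W.map R < W ∧ (∀ v, v - R v ∈ W) ∧ ∀ v, ‖R v‖ ≤ ‖v‖ := by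
  obtain ⟨w, hwW, hw0⟩ := W.exists_mem_ne_zero_of_ne_bot hW
  obtain ⟨s, hs⟩ := Function.ne_iff.mp hw0
  have : Nonempty ι := ⟨s⟩
  obtain ⟨t, ht⟩ := Finite.exists_max fun i => ‖w i‖
  have hwt : w t ≠ 0 := fun h => hs (norm_le_zero_iff.mp (by simpa [h] using ht s))
  have hnorm : ‖w‖ = ‖w t‖ :=
    le_antisymm ((pi_norm_le_iff_of_nonneg (norm_nonneg _)).mpr ht) (norm_le_pi_norm w t)
  let R : (ι → K) →ₗ[K] (ι → K) := LinearMap.id - (w t)⁻¹ • (LinearMap.proj t).smulRight w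
  have hR : ∀ v, R v = v - (v t / w t) • w := fun v => by
    simp [R, div_eq_inv_mul, mul_smul]
  have hRt : ∀ v, R v t = 0 := fun v => by
    simp [hR, div_mul_cancel₀ _ hwt]
  refine ⟨R, lt_of_le_of_ne ?_ fun h => ?_, fun v => ?_, fun v => ?_⟩
  · rintro _ ⟨v, hv, rfl⟩
    rw [hR]
    exact W.sub_mem hv (W.smul_mem _ hwW)
  · obtain ⟨v, -, hv⟩ := h.symm ▸ hwW
    exact hwt (hv ▸ hRt v)
  · rw [hR, sub_sub_cancel]
    exact W.smul_mem _ hwW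
  · rw [hR]
    refine (norm_sub_le_max_of_isUltrametricDist _ _).trans (max_le le_rfl ?_)
    rw [norm_smul, norm_div, hnorm, div_mul_cancel₀ _ (norm_ne_zero_iff.mpr hwt)]
    exact norm_le_pi_norm v t

theorem exists_contractive_projection_along {ι : Type*} [Fintype ι]
    (W : Submodule K (ι → K)) :
    ∃ Q : (ι → K) →ₗ[K] (ι → K), W ≤ LinearMap.ker Q ∧ (∀ v, v - Q v ∈ W) ∧
      ∀ v, ‖Q v‖ ≤ ‖v‖ := by
  induction W using WellFoundedLT.induction with
  | ind W ih =>
    rcases eq_or_ne W ⊥ with rfl | hW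
    · exact ⟨LinearMap.id, bot_le, fun v => by simp, fun v => le_rfl⟩
    obtain ⟨R, hRW, hRsub, hRnorm⟩ := exists_contractive_map_lt_of_ne_bot hW
    obtain ⟨Q, hQker, hQsub, hQnorm⟩ := ih _ hRW
    refine ⟨Q ∘ₗ R, fun v hv => hQker ⟨v, hv, rfl⟩, fun v => ?_,
      fun v => (hQnorm _).trans (hRnorm v)⟩
    rw [← sub_add_sub_cancel v (R v)]
    exact W.add_mem (hRsub v) (hRW.le (hQsub (R v)))

end Ultrametric

namespace MvPolynomial

section CommSemiring

variable {R σ τ : Type*} [CommSemiring R]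

theorem coeff_coeff_sumAlgEquiv (f : MvPolynomial (σ ⊕ τ) R) (β : σ →₀ ℕ) (α : τ →₀ ℕ) :
    ((sumAlgEquiv R σ τ f).coeff β).coeff α = f.coeff (Finsupp.sumElim β α) := by
  simp [sumAlgEquiv, coeff, AddMonoidAlgebra.curryAlgEquiv, AddMonoidAlgebra.curryRingEquiv,
    AddMonoidAlgebra.curryAddEquiv, AddMonoidAlgebra.coeff_domCongr]

theorem eval_map_eval_sumAlgEquiv (f : MvPolynomial (σ ⊕ τ) R) (x : σ → R) (y : τ → R) :
    eval x (map (eval y) (sumAlgEquiv R σ τ f)) = eval (Sum.elim x y) f := by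
  induction f using MvPolynomial.induction_on with
  | C r => simp
  | add p q hp hq => simp [hp, hq]
  | mul_X p i hp => cases i <;> simp [hp]

noncomputable def ofCoeffsOn (T : Finset (σ →₀ ℕ)) : (T → R) →ₗ[R] MvPolynomial σ R :=
  Fintype.linearCombination R fun β : T => monomial (β : σ →₀ ℕ) 1

theorem coeff_ofCoeffsOn {T : Finset (σ →₀ ℕ)} (u : T → R) (β : T) :
    (ofCoeffsOn T u).coeff β = u β := by
  classical
  simp [ofCoeffsOn, Fintype.linearCombination_apply, coeff_sum, coeff_monomial]

theorem coeff_ofCoeffsOn_of_notMem {T : Finset (σ →₀ ℕ)} (u : T → R) {d : σ →₀ ℕ}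
    (hd : d ∉ T) : (ofCoeffsOn T u).coeff d = 0 := by
  classical
  simp only [ofCoeffsOn, Fintype.linearCombination_apply, coeff_sum, coeff_smul, coeff_monomial,
    smul_eq_mul, mul_ite, mul_one, mul_zero]
  exact Finset.sum_eq_zero fun β _ => if_neg fun (h : (β : σ →₀ ℕ) = d) => hd (h ▸ β.2)

theorem ofCoeffsOn_support_coeff {S : Type*} [CommSemiring S] (F : MvPolynomial σ S)
    (φ : S →+* R) : ofCoeffsOn F.support (fun β => φ (F.coeff β)) = map φ F := by
  ext d
  rw [coeff_map]
  by_cases hd : d ∈ F.support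
  · exact coeff_ofCoeffsOn _ ⟨d, hd⟩
  · rw [coeff_ofCoeffsOn_of_notMem _ hd, notMem_support_iff.mp hd, map_zero]

end CommSemiring

theorem mem_vanishingIdeal_iff_eval {k σ : Type*} [Field k] {A : Set (σ → k)}
    {g : MvPolynomial σ k} : g ∈ vanishingIdeal k A ↔ ∀ a ∈ A, eval a g = 0 :=
  Iff.rfl

section NormedField

variable {K σ τ : Type*} [NormedField K]

theorem norm_coeff_rename_le_one {e : σ → τ} (he : Function.Injective e)
    {g : MvPolynomial σ K} (hg : ∀ d, ‖g.coeff d‖ ≤ 1) (d : τ →₀ ℕ) :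
    ‖(rename e g).coeff d‖ ≤ 1 := by
  by_cases hd : ∃ u : σ →₀ ℕ, u.mapDomain e = d
  · obtain ⟨u, rfl⟩ := hd
    rw [coeff_rename_mapDomain e he]
    exact hg u
  · rw [coeff_rename_eq_zero e g d fun u hu => absurd ⟨u, hu⟩ hd, norm_zero]
    exact zero_le_one

theorem norm_coeff_ofCoeffsOn_le {T : Finset (σ →₀ ℕ)} (u : T → K) (d : σ →₀ ℕ) :
    ‖(ofCoeffsOn T u).coeff d‖ ≤ ‖u‖ := by
  by_cases hd : d ∈ T
  · exact (coeff_ofCoeffsOn u ⟨d, hd⟩).symm ▸ norm_le_pi_norm u _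
  · simp [coeff_ofCoeffsOn_of_notMem u hd]

theorem exists_norm_coeff_le_one_and_eval_eq_apply {ι κ : Type*} [Fintype ι] [Fintype κ]
    (Q : (ι → K) →ₗ[K] (κ → K)) (hQ : ∀ v, ‖Q v‖ ≤ ‖v‖) (H : ι → MvPolynomial τ K)
    (hH : ∀ γ d, ‖(H γ).coeff d‖ ≤ 1) :
    ∃ G : κ → MvPolynomial τ K, (∀ β d, ‖(G β).coeff d‖ ≤ 1) ∧
      ∀ y β, eval y (G β) = Q (fun γ => eval y (H γ)) β := by
  classical
  let G : κ → MvPolynomial τ K := fun β => ∑ γ, Q (Pi.single γ 1) β • H γ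
  have hG : ∀ (φ : MvPolynomial τ K →ₗ[K] K) β, φ (G β) = Q (fun γ => φ (H γ)) β := by
    intro φ β
    conv_rhs => rw [LinearMap.pi_apply_eq_sum_univ Q]
    simp only [G, map_sum, map_smul, Finset.sum_apply, Pi.smul_apply, smul_eq_mul, mul_comm]
    refine Finset.sum_congr rfl fun γ _ => congrArg _ (congrFun (congrArg Q ?_) β)
    ext j
    simp [Pi.single_apply, eq_comm]
  refine ⟨G, fun β d => ?_, fun y β => hG (aeval y).toLinearMap β⟩
  rw [← lcoeff_apply, hG]
  refine (norm_le_pi_norm _ β).trans ((hQ _).trans ?_)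
  exact (pi_norm_le_iff_of_nonneg zero_le_one).mpr fun γ => hH γ d

theorem norm_eval_le_of_forall_norm_coeff_le [IsUltrametricDist K] {x : σ → K}
    (hx : ∀ i, ‖x i‖ ≤ 1) {g : MvPolynomial σ K} {M : ℝ} (hg : ∀ d, ‖g.coeff d‖ ≤ M) :
    ‖eval x g‖ ≤ M := by
  rw [eval_eq]
  refine IsUltrametricDist.norm_sum_le_of_forall_le_of_nonneg ((norm_nonneg _).trans (hg 0))
    fun d _ => ?_
  rw [norm_mul, norm_prod]
  refine (mul_le_of_le_one_right (norm_nonneg _) ?_).trans (hg d)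
  exact Finset.prod_le_one (fun _ _ => norm_nonneg _) fun i _ =>
    (norm_pow (x i) _).symm ▸ pow_le_one₀ (norm_nonneg _) (hx i)

end NormedField

end MvPolynomial

theorem norm_eval_sumElim_le_max {K σ τ : Type*} [NormedField K] [IsUltrametricDist K]
    {A : Set (σ → K)} {B : Set (τ → K)} {f : MvPolynomial (σ ⊕ τ) K}
    (hf : ∀ a ∈ A, ∀ b ∈ B, eval (Sum.elim a b) f = 0) (hf1 : ∀ d, ‖f.coeff d‖ ≤ 1)
    {x : σ → K} {y : τ → K} (hx : ∀ i, ‖x i‖ ≤ 1) (hy : ∀ j, ‖y j‖ ≤ 1) {δ ε : ℝ}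
    (hδ : ∀ g ∈ vanishingIdeal K A, (∀ d, ‖g.coeff d‖ ≤ 1) → ‖eval x g‖ ≤ δ)
    (hε : ∀ g ∈ vanishingIdeal K B, (∀ d, ‖g.coeff d‖ ≤ 1) → ‖eval y g‖ ≤ ε) :
    ‖eval (Sum.elim x y) f‖ ≤ max δ ε := by
  set F := sumAlgEquiv K σ τ f
  have hF1 : ∀ β α, ‖((F.coeff β).coeff α)‖ ≤ 1 := fun β α =>
    (coeff_coeff_sumAlgEquiv f β α).symm ▸ hf1 _
  let W : Submodule K (F.support → K) :=
    ((vanishingIdeal K A).restrictScalars K).comap (ofCoeffsOn F.support)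
  obtain ⟨Q, hQW, hQsub, hQnorm⟩ := exists_contractive_projection_along W
  obtain ⟨G, hG1, hGeval⟩ :=
    exists_norm_coeff_le_one_and_eval_eq_apply Q hQnorm (fun β => F.coeff β) fun β => hF1 β
  let c : (τ → K) → F.support → K := fun b β => eval b (F.coeff β)
  have hc : ∀ a b, eval (Sum.elim a b) f = eval a (ofCoeffsOn F.support (c b)) := fun a b => by
    rw [ofCoeffsOn_support_coeff F (eval b), eval_map_eval_sumAlgEquiv]
  have hcW : ∀ b ∈ B, c b ∈ W := fun b hb =>
    mem_vanishingIdeal_iff_eval.mpr fun a ha => (hc a b).symm.trans (hf a ha b hb)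
  have hε0 : 0 ≤ ε := by simpa using hε 0 (zero_mem _) (by simp)
  have hQc : ‖Q (c y)‖ ≤ ε := by
    refine (pi_norm_le_iff_of_nonneg hε0).mpr fun β => hGeval y β ▸ hε (G β) ?_ (hG1 β)
    exact mem_vanishingIdeal_iff_eval.mpr fun b hb => by
      rw [hGeval, hQW (hcW b hb), Pi.zero_apply]
  have hc1 : ‖c y‖ ≤ 1 := (pi_norm_le_iff_of_nonneg zero_le_one).mpr fun β =>
    norm_eval_le_of_forall_norm_coeff_le hy (hF1 β)
  rw [hc, ← sub_add_cancel (c y) (Q (c y)), map_add, map_add]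
  refine (IsUltrametricDist.norm_add_le_max _ _).trans (max_le_max ?_ ?_)
  · refine hδ _ (hQsub (c y)) fun d => (norm_coeff_ofCoeffsOn_le _ d).trans ?_
    exact (norm_sub_le_max_of_isUltrametricDist _ _).trans (max_le hc1 ((hQnorm _).trans hc1))
  · exact norm_eval_le_of_forall_norm_coeff_le hx fun d => (norm_coeff_ofCoeffsOn_le _ d).trans hQc

theorem sumElim_comp_finSumFinEquiv_symm {α : Type*} {n m : ℕ} (x : Fin n → α)
    (y : Fin m → α) : Sum.elim x y ∘ finSumFinEquiv.symm = Fin.append x y := by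
  rw [← Fin.append_comp_sumElim]
  ext i
  exact congrArg (Fin.append x y) (finSumFinEquiv.apply_symm_apply i)

theorem forall_norm_append_le_one {E : Type*} [Norm E] {n m : ℕ} {x : Fin n → E}
    {y : Fin m → E} (hx : ∀ i, ‖x i‖ ≤ 1) (hy : ∀ j, ‖y j‖ ≤ 1) (i : Fin (n + m)) :
    ‖Fin.append x y i‖ ≤ 1 :=
  Fin.addCases (fun i => by simpa using hx i) (fun j => by simpa using hy j) i

section pDist

variable {K : Type*} [NormedField K] {n m : ℕ}

theorem pDist_le {x : Fin n → K} {Z : Set (Fin n → K)} {r : ℝ}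
    (h : ∀ g ∈ vanishingIdeal K Z, (∀ d, ‖g.coeff d‖ ≤ 1) → ‖eval x g‖ ≤ r) : pDist x Z ≤ r :=
  csSup_le ⟨_, 0, fun _ _ => map_zero _, fun _ => by simp, rfl⟩ <| by
    rintro _ ⟨g, hg, hg1, rfl⟩
    exact h g hg hg1

variable [IsUltrametricDist K]

theorem norm_eval_le_pDist {x : Fin n → K} (hx : ∀ i, ‖x i‖ ≤ 1) {Z : Set (Fin n → K)}
    {g : MvPolynomial (Fin n) K} (hg : g ∈ vanishingIdeal K Z) (hg1 : ∀ d, ‖g.coeff d‖ ≤ 1) :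
    ‖eval x g‖ ≤ pDist x Z := by
  refine le_csSup ⟨1, ?_⟩ ⟨g, hg, hg1, rfl⟩
  rintro _ ⟨g, -, hg1, rfl⟩
  exact norm_eval_le_of_forall_norm_coeff_le hx hg1

theorem pDist_comp_le {k : ℕ} {e : Fin n → Fin k} (he : Function.Injective e) {z : Fin k → K}
    (hz : ∀ i, ‖z i‖ ≤ 1) {Z : Set (Fin n → K)} {Z₁ : Set (Fin k → K)}
    (hZ : ∀ w ∈ Z₁, w ∘ e ∈ Z) : pDist (z ∘ e) Z ≤ pDist z Z₁ := by
  refine pDist_le fun g hg hg1 => ?_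
  rw [← eval_rename]
  refine norm_eval_le_pDist hz ?_ (norm_coeff_rename_le_one he hg1)
  exact mem_vanishingIdeal_iff_eval.mpr fun w hw => by rw [eval_rename]; exact hg _ (hZ w hw)

theorem pDist_append_le_max (Z : Set (Fin n → K)) (Z' : Set (Fin m → K)) {x : Fin n → K}
    {y : Fin m → K} (hx : ∀ i, ‖x i‖ ≤ 1) (hy : ∀ j, ‖y j‖ ≤ 1) :
    pDist (Fin.append x y) (setProd Z Z') ≤ max (pDist x Z) (pDist y Z') := by
  refine pDist_le fun f hf hf1 => ?_
  have key := norm_eval_sumElim_le_max (f := rename finSumFinEquiv.symm f) (A := Z) (B := Z')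
    ?_ (norm_coeff_rename_le_one finSumFinEquiv.symm.injective hf1) hx hy
    (fun g hg hg1 => norm_eval_le_pDist hx hg hg1) (fun g hg hg1 => norm_eval_le_pDist hy hg hg1)
  · rwa [eval_rename, sumElim_comp_finSumFinEquiv_symm] at key
  · intro a ha b hb
    rw [eval_rename, sumElim_comp_finSumFinEquiv_symm]
    exact hf _ ⟨by simpa using ha, by simpa using hb⟩

theorem pDist_le_pDist_append_left (Z : Set (Fin n → K)) (Z' : Set (Fin m → K))
    {x : Fin n → K} {y : Fin m → K} (hx : ∀ i, ‖x i‖ ≤ 1) (hy : ∀ j, ‖y j‖ ≤ 1) :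
    pDist x Z ≤ pDist (Fin.append x y) (setProd Z Z') := by
  simpa [Function.comp_def] using pDist_comp_le (Fin.castAdd_injective n m)
    (forall_norm_append_le_one hx hy) (Z := Z) fun w hw => hw.1

theorem pDist_le_pDist_append_right (Z : Set (Fin n → K)) (Z' : Set (Fin m → K))
    {x : Fin n → K} {y : Fin m → K} (hx : ∀ i, ‖x i‖ ≤ 1) (hy : ∀ j, ‖y j‖ ≤ 1) :
    pDist y Z' ≤ pDist (Fin.append x y) (setProd Z Z') := by
  simpa [Function.comp_def] using pDist_comp_le (Fin.natAdd_injective m n)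
    (forall_norm_append_le_one hx hy) (Z := Z') fun w hw => hw.2

end pDist

theorem stmt_8_general
    (C : Type*) [NormedField C] [IsUltrametricDist C]
    (n m : ℕ) (Z : Set (Fin n → C)) (Z' : Set (Fin m → C)) :
    (∃ c : ℝ, 1 ≤ c ∧
      ∀ (x : Fin n → C) (y : Fin m → C), (∀ i, ‖x i‖ ≤ 1) → (∀ j, ‖y j‖ ≤ 1) →
        pDist (Fin.append x y) (setProd Z Z') ≤ c * max (pDist x Z) (pDist y Z')) ∧
    (∀ (x : Fin n → C) (y : Fin m → C), (∀ i, ‖x i‖ ≤ 1) → (∀ j, ‖y j‖ ≤ 1) →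
      max (pDist x Z) (pDist y Z') ≤ pDist (Fin.append x y) (setProd Z Z')) := by
  refine ⟨⟨1, le_rfl, fun _ _ hx hy => ?_⟩, fun _ _ hx hy => ?_⟩
  · rw [one_mul]
    exact pDist_append_le_max Z Z' hx hy
  · exact max_le (pDist_le_pDist_append_left Z Z' hx hy) (pDist_le_pDist_append_right Z Z' hx hy)

/-- Let `p` be a prime, let `C` be (a field satisfying the defining properties of) `ℂ_p`,
let `Z ⊆ C^n` and `Z' ⊆ C^m` be Zariski closed.  Then:
(a) there is `c ≥ 1`, depending only on `Z` and `Z'`, with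
`dist_p((x,y), Z × Z') ≤ c·max{dist_p(x,Z), dist_p(y,Z')}` for all `x ∈ 𝒪_p^n`,
`y ∈ 𝒪_p^m`; and
(b) `max{dist_p(x,Z), dist_p(y,Z')} ≤ dist_p((x,y), Z × Z')` for all such `x, y`. -/
theorem stmt_8 (p : ℕ) [Fact p.Prime]
    (C : Type*) [NormedField C] [CompleteSpace C] [IsAlgClosed C] [IsUltrametricDist C]
    [Algebra ℚ_[p] C] (h_ext : ∀ q : ℚ_[p], ‖algebraMap ℚ_[p] C q‖ = ‖q‖)
    (n m : ℕ) (Z : Set (Fin n → C)) (Z' : Set (Fin m → C))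
    (hZ : IsZariskiClosed Z) (hZ' : IsZariskiClosed Z') :
    (∃ c : ℝ, 1 ≤ c ∧
      ∀ (x : Fin n → C) (y : Fin m → C), (∀ i, ‖x i‖ ≤ 1) → (∀ j, ‖y j‖ ≤ 1) →
        pDist (Fin.append x y) (setProd Z Z') ≤ c * max (pDist x Z) (pDist y Z')) ∧
    (∀ (x : Fin n → C) (y : Fin m → C), (∀ i, ‖x i‖ ≤ 1) → (∀ j, ‖y j‖ ≤ 1) →
      max (pDist x Z) (pDist y Z') ≤ pDist (Fin.append x y) (setProd Z Z')) :=
  stmt_8_general C n m Z Z'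
end

section
/- Let p be a prime, n ≥ 0 an integer and x an odd integer. In ℂ set θ = (1+√−3)/2, α = (1 − √−3·x)/2, β = (3 − 2θ)·p^n/7, and d = 3x² + 4p^{2n+1}, and let φ be the 2×2 complex matrix with first row (α, β) and second row (−7p·β̄, ᾱ), where the bar denotes complex conjugation. Then φ² − φ + ((1+d)/4)·I₂ = 0, where I₂ is the 2×2 identity matrix. Moreover α ∈ ℤ[θ], 7β ∈ p^n·ℤ[θ], and √−3·(2+√−3)·β ∈ p^n·ℤ[θ]. -/
/-!
By Cayley–Hamilton, `φ² − tr φ · φ + det φ · I₂ = 0`. Since `s = √−3` is purely imaginary,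
`tr φ = α + ᾱ = 1` and `det φ = |α|² + 7p|β|² = (1 + 3x²)/4 + p^{2n+1} = (1 + d)/4`,
using `|3 − 2θ|² = |2 − s|² = 7`. The integrality claims are explicit identities in `θ`.
-/

open Complex ComplexConjugate

theorem Matrix.sq_sub_trace_smul_add_det_smul_fin_two {R : Type*} [CommRing R]
    (M : Matrix (Fin 2) (Fin 2) R) :
    M ^ 2 - M.trace • M + M.det • (1 : Matrix (Fin 2) (Fin 2) R) = 0 := by
  ext i j
  fin_cases i <;> fin_cases j <;>
    simp [sq, Matrix.mul_apply, Matrix.trace_fin_two, Matrix.det_fin_two] <;> ring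

theorem Complex.I_mul_sqrt_three_sq : (I * √3) ^ 2 = -3 := by
  rw [mul_pow, I_sq, ← ofReal_pow, Real.sq_sqrt (by norm_num)]
  norm_num

theorem Complex.conj_I_mul_sqrt_three : conj (I * √3) = -(I * √3) := by
  simp

theorem stmt_9_general (p : ℕ) (n : ℕ) (x : ℤ) (hx : Odd x)
    (s θ α β : ℂ) (d : ℤ)
    (hs : s = Complex.I * Real.sqrt 3)
    (hθ : θ = (1 + s) / 2)
    (hα : α = (1 - s * x) / 2)
    (hβ : β = (3 - 2 * θ) * (p : ℂ) ^ n / 7)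
    (hd : d = 3 * x ^ 2 + 4 * (p : ℤ) ^ (2 * n + 1))
    (φ : Matrix (Fin 2) (Fin 2) ℂ)
    (hφ : φ = !![α, β; -7 * (p : ℂ) * (starRingEnd ℂ) β, (starRingEnd ℂ) α]) :
    φ ^ 2 - φ + (((1 + d : ℤ) : ℂ) / 4) • (1 : Matrix (Fin 2) (Fin 2) ℂ) = 0 ∧
    (∃ a b : ℤ, α = (a : ℂ) + (b : ℂ) * θ) ∧
    (∃ a b : ℤ, 7 * β = (p : ℂ) ^ n * ((a : ℂ) + (b : ℂ) * θ)) ∧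
    (∃ a b : ℤ, s * (2 + s) * β = (p : ℂ) ^ n * ((a : ℂ) + (b : ℂ) * θ)) := by
  have hs2 : s ^ 2 = -3 := hs ▸ I_mul_sqrt_three_sq
  have hcs : conj s = -s := hs ▸ conj_I_mul_sqrt_three
  subst hθ
  have hcα : conj α = (1 + s * x) / 2 := by
    simp only [hα, map_div₀, map_sub, map_one, map_mul, hcs, map_intCast, map_ofNat]
    ring
  have hcβ : conj β = (2 + s) * (p : ℂ) ^ n / 7 := by
    simp only [hβ, map_div₀, map_sub, map_add, map_one, map_mul, hcs, map_pow, map_natCast,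
      map_ofNat]
    ring
  have htrace : φ.trace = 1 := by
    rw [hφ, Matrix.trace_fin_two_of, hcα, hα]
    ring
  have hdet : φ.det = ((1 + d : ℤ) : ℂ) / 4 := by
    rw [hφ, Matrix.det_fin_two_of, hcα, hcβ, hα, hβ, hd]
    push_cast
    linear_combination (-(x : ℂ) ^ 2 / 4 - p * ((p : ℂ) ^ n) ^ 2 / 7) * hs2
  obtain ⟨k, rfl⟩ := hx
  refine ⟨?_, ⟨k + 1, -(2 * k + 1), ?_⟩, ⟨3, -2, ?_⟩, ⟨-1, 2, ?_⟩⟩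
  · simpa [htrace, hdet] using φ.sq_sub_trace_smul_add_det_smul_fin_two
  · rw [hα]; push_cast; ring
  · rw [hβ]; push_cast; ring
  · -- `3 − 2θ = 2 − s` and `(2 + s)(2 − s) = 7`, so `s (2 + s) β = s pⁿ = pⁿ (2θ − 1)`.
    rw [hβ]
    push_cast
    linear_combination (-s * (p : ℂ) ^ n / 7) * hs2

open Complex in
/-- Let `p` be a prime, `n ≥ 0` an integer and `x` an odd integer.  In `ℂ` set
`θ = (1+√−3)/2`, `α = (1 − √−3·x)/2`, `β = (3 − 2θ)·p^n/7`, `d = 3x² + 4p^{2n+1}`, and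
let `φ` be the `2×2` complex matrix with rows `(α, β)` and `(−7p·β̄, ᾱ)`.  Then
`φ² − φ + ((1+d)/4)·I₂ = 0`, and moreover `α ∈ ℤ[θ]`, `7β ∈ p^n·ℤ[θ]` and
`√−3·(2+√−3)·β ∈ p^n·ℤ[θ]`. -/
theorem stmt_9 (p : ℕ) (hp : p.Prime) (n : ℕ) (x : ℤ) (hx : Odd x)
    (s θ α β : ℂ) (d : ℤ)
    (hs : s = Complex.I * Real.sqrt 3)
    (hθ : θ = (1 + s) / 2)
    (hα : α = (1 - s * x) / 2)
    (hβ : β = (3 - 2 * θ) * (p : ℂ) ^ n / 7)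
    (hd : d = 3 * x ^ 2 + 4 * (p : ℤ) ^ (2 * n + 1))
    (φ : Matrix (Fin 2) (Fin 2) ℂ)
    (hφ : φ = !![α, β; -7 * (p : ℂ) * (starRingEnd ℂ) β, (starRingEnd ℂ) α]) :
    φ ^ 2 - φ + (((1 + d : ℤ) : ℂ) / 4) • (1 : Matrix (Fin 2) (Fin 2) ℂ) = 0 ∧
    (∃ a b : ℤ, α = (a : ℂ) + (b : ℂ) * θ) ∧
    (∃ a b : ℤ, 7 * β = (p : ℂ) ^ n * ((a : ℂ) + (b : ℂ) * θ)) ∧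
    (∃ a b : ℤ, s * (2 + s) * β = (p : ℂ) ^ n * ((a : ℂ) + (b : ℂ) * θ)) :=
  stmt_9_general p n x hx s θ α β d hs hθ hα hβ hd φ hφ
end

section
/- There exists an absolute constant C > 0 with the following property. Let p ≥ 5 be a prime, n ≥ 1 an integer, k ≥ 1 an integer, and y a real number with y ≥ 3. Then the number of pairs (x,d) of positive integers with 3x² + 4p^{2n+1} = d²k and d²k ≤ y is at most C·(log y)². -/
/-!
If `(x, d)` and `(x', d')` are solutions with `d < d'`, then
`3 (d x' - x d') (d x' + x d') = 4 p^(2n+1) (d'² - d²)`. Hence, as soon as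
`p^m ∣ d x' - x d'` with `p^(2m) k ≥ p^(4n+2)`, the gap `d'² - d²` is at least `(3/16) d²`;
solutions that pairwise satisfy such a divisibility grow geometrically and there are `O(log y)`
of them.

Comparing `p`-adic valuations in `3x² + 4p^(2n+1) = d²k` gives
`2 v(d) + v(k) = min (2 v(x)) (2n+1)`. All solutions with `v(x) > n` share `v(d)`, and the
divisibility is then immediate. If `v(x) = β ≤ n`, removing the `p`-parts leaves
`K D² = 3 X² + 4 p^E` with `E = 2n+1-2β` and `p ∤ X D K`; modulo `p^E` the ratio `X/D` is a
square root of `K/3`, so it takes one value up to sign and the solutions split into two families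
with `p^E ∣ D X' - X D'`. Finally there are only `n + 2 ≤ log y` values of `min (v(x)) (n+1)`.
-/

open Finset

theorem Nat.factorization_add_eq_min {p a b : ℕ} (hp : p.Prime) (ha : a ≠ 0) (hb : b ≠ 0)
    (h : a.factorization p ≠ b.factorization p) :
    (a + b).factorization p = min (a.factorization p) (b.factorization p) := by
  have := Fact.mk hp
  simp only [Nat.factorization_def _ hp] at h ⊢
  have hmin := padicValRat.add_eq_min (p := p) (q := a) (r := b) (by positivity)
    (by exact_mod_cast ha) (by exact_mod_cast hb) (by simpa [padicValRat.of_nat] using h)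
  rw [← Nat.cast_add, padicValRat.of_nat, padicValRat.of_nat, padicValRat.of_nat] at hmin
  exact_mod_cast hmin

theorem Real.one_le_log_of_three_le {y : ℝ} (hy : 3 ≤ y) : 1 ≤ Real.log y := by
  rw [Real.le_log_iff_exp_le (by linarith)]
  linarith [Real.exp_one_lt_d9]

theorem card_le_logb_add_one_of_mul_le {C : Finset ℝ} {r y : ℝ} (hr : 1 < r) (hy : 1 ≤ y)
    (hC1 : ∀ a ∈ C, 1 ≤ a) (hCy : ∀ a ∈ C, a ≤ y) (hsep : ∀ a ∈ C, ∀ b ∈ C, a < b → r * a ≤ b) :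
    (C.card : ℝ) ≤ Real.logb r y + 1 := by
  have hfloor : ∀ a ∈ C, ∀ b ∈ C, a < b → ⌊Real.logb r a⌋₊ < ⌊Real.logb r b⌋₊ := by
    intro a ha b hb hab
    have hab' : Real.logb r a + 1 ≤ Real.logb r b :=
      calc Real.logb r a + 1 = Real.logb r (r * a) := by
            rw [Real.logb_mul (by positivity) (by linarith [hC1 a ha]), Real.logb_self_eq_one hr]
            ring
        _ ≤ Real.logb r b :=
            Real.logb_le_logb_of_le hr (by nlinarith [hC1 a ha]) (hsep a ha b hb hab)
    calc ⌊Real.logb r a⌋₊ < ⌊Real.logb r a⌋₊ + 1 := Nat.lt_succ_self _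
      _ = ⌊Real.logb r a + 1⌋₊ := (Nat.floor_add_one (Real.logb_nonneg hr (hC1 a ha))).symm
      _ ≤ ⌊Real.logb r b⌋₊ := Nat.floor_le_floor hab'
  have hcard : C.card ≤ (range (⌊Real.logb r y⌋₊ + 1)).card := by
    refine card_le_card_of_injOn (fun a => ⌊Real.logb r a⌋₊) (fun a ha => ?_)
      (fun a ha b hb hab => ?_)
    · simp only [coe_range, Set.mem_Iio]
      exact Nat.lt_succ_of_le (Nat.floor_le_floor
        (Real.logb_le_logb_of_le hr (by linarith [hC1 a ha]) (hCy a ha)))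
    · by_contra hne
      rcases lt_or_gt_of_ne hne with h | h
      · exact (hfloor a ha b hb h).ne hab
      · exact (hfloor b hb a ha h).ne hab.symm
  rw [card_range] at hcard
  calc (C.card : ℝ) ≤ ((⌊Real.logb r y⌋₊ + 1 : ℕ) : ℝ) := by exact_mod_cast hcard
    _ ≤ Real.logb r y + 1 := by
      push_cast
      gcongr
      exact Nat.floor_le (Real.logb_nonneg hr hy)

theorem mul_sq_le_of_sq_eq {K L N L₀ X D X' D' : ℤ} (hL : 0 < L) (hN : 0 < N)
    (hX : 0 ≤ X) (hX' : 0 < X') (hD : 0 < D) (hDD' : D < D')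
    (h : K * D ^ 2 = L * X ^ 2 + N) (h' : K * D' ^ 2 = L * X' ^ 2 + N)
    (hdvd : L₀ ∣ D * X' - X * D') :
    L * L₀ ^ 2 * K * D ^ 2 ≤ N ^ 2 * (D' ^ 2 - D ^ 2) := by
  set v := D * X' - X * D'
  set w := D * X' + X * D'
  have hgap : 0 < D' ^ 2 - D ^ 2 := by nlinarith
  have hvw : L * (v * w) = N * (D' ^ 2 - D ^ 2) := by
    linear_combination D' ^ 2 * h - D ^ 2 * h'
  have hw : D * X' ≤ w := by nlinarith
  have hv : 0 < v := by
    have : 0 < L * (v * w) := hvw ▸ mul_pos hN hgap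
    exact pos_of_mul_pos_left (pos_of_mul_pos_right this hL.le) (by nlinarith)
  have hL₀v : |L₀| ≤ v := Int.le_of_dvd hv ((abs_dvd L₀ v).mpr hdvd)
  have hlin : L * |L₀| * (D * X') ≤ N * (D' ^ 2 - D ^ 2) := by
    rw [← hvw, mul_assoc]
    exact mul_le_mul_of_nonneg_left (mul_le_mul hL₀v hw (by positivity) hv.le) hL.le
  have hKX' : K * (D' ^ 2 - D ^ 2) ≤ L * X' ^ 2 := by nlinarith
  have : L * L₀ ^ 2 * K * D ^ 2 * (D' ^ 2 - D ^ 2) ≤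
      N ^ 2 * (D' ^ 2 - D ^ 2) * (D' ^ 2 - D ^ 2) :=
    calc L * L₀ ^ 2 * K * D ^ 2 * (D' ^ 2 - D ^ 2)
        = L * L₀ ^ 2 * D ^ 2 * (K * (D' ^ 2 - D ^ 2)) := by ring
      _ ≤ L * L₀ ^ 2 * D ^ 2 * (L * X' ^ 2) := by gcongr
      _ = (L * |L₀| * (D * X')) ^ 2 := by rw [mul_pow, mul_pow, sq_abs]; ring
      _ ≤ (N * (D' ^ 2 - D ^ 2)) ^ 2 := by gcongr
      _ = N ^ 2 * (D' ^ 2 - D ^ 2) * (D' ^ 2 - D ^ 2) := by ring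
  exact le_of_mul_le_mul_right this hgap

theorem Prime.pow_dvd_sub_or_pow_dvd_add {q : ℤ} (hq : Prime q) (hq2 : ¬q ∣ 2) {E : ℕ}
    {K L N X D X' D' : ℤ} (hL : ¬q ∣ L) (hD : ¬q ∣ D) (hX' : ¬q ∣ X')
    (h : K * D ^ 2 = L * X ^ 2 + q ^ E * N) (h' : K * D' ^ 2 = L * X' ^ 2 + q ^ E * N) :
    q ^ E ∣ D * X' - X * D' ∨ q ^ E ∣ D * X' + X * D' := by
  have hprod : L * ((D * X' - X * D') * (D * X' + X * D')) = q ^ E * (N * (D' ^ 2 - D ^ 2)) := by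
    linear_combination D' ^ 2 * h - D ^ 2 * h'
  have hdvd : q ^ E ∣ (D * X' - X * D') * (D * X' + X * D') :=
    (hq.coprime_iff_not_dvd.mpr hL).pow_left.dvd_of_dvd_mul_left ⟨_, hprod⟩
  by_cases hv : q ∣ D * X' - X * D'
  · have hw : ¬q ∣ D * X' + X * D' := fun hw => by
      have h2DX' : q ∣ 2 * D * X' := by
        rw [show 2 * D * X' = (D * X' - X * D') + (D * X' + X * D') by ring]
        exact dvd_add hv hw
      simp [hq.dvd_mul, hq2, hD, hX'] at h2DX'
    exact Or.inl (hq.pow_dvd_of_dvd_mul_right E hw hdvd)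
  · exact Or.inr (hq.pow_dvd_of_dvd_mul_left E hv hdvd)

theorem IsCoprime.dvd_cross_of_dvd_cross {q a b X D X' D' : ℤ} (hqa : IsCoprime q a)
    (h : q ∣ a * X - b * D) (h' : q ∣ a * X' - b * D') : q ∣ D * X' - X * D' := by
  apply hqa.dvd_of_dvd_mul_left
  rw [show a * (D * X' - X * D') = D * (a * X' - b * D') - D' * (a * X - b * D) by ring]
  exact dvd_sub (h'.mul_left _) (h.mul_left _)

variable {p n k : ℕ}

theorem ne_zero_and_ne_zero_of_eq {x d : ℕ} (hx : 0 < x)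
    (h : 3 * x ^ 2 + 4 * p ^ (2 * n + 1) = d ^ 2 * k) : d ≠ 0 ∧ k ≠ 0 := by
  have hdk : d ^ 2 * k ≠ 0 := h ▸ by positivity
  simpa using hdk

theorem two_mul_factorization_add_eq_min (hp : p.Prime) (hp2 : p ≠ 2) (hp3 : p ≠ 3) {x d : ℕ}
    (hx : 0 < x) (h : 3 * x ^ 2 + 4 * p ^ (2 * n + 1) = d ^ 2 * k) :
    2 * d.factorization p + k.factorization p = min (2 * x.factorization p) (2 * n + 1) := by
  obtain ⟨hd, hk⟩ := ne_zero_and_ne_zero_of_eq hx h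
  have h3 : (3 : ℕ).factorization p = 0 := Nat.factorization_eq_zero_of_not_dvd fun h =>
    hp3 ((Nat.prime_dvd_prime_iff_eq hp Nat.prime_three).mp h)
  have h4 : (4 : ℕ).factorization p = 0 := Nat.factorization_eq_zero_of_not_dvd fun h =>
    hp2 ((Nat.prime_dvd_prime_iff_eq hp Nat.prime_two).mp (hp.dvd_of_dvd_pow (n := 2) h))
  have hx' : (3 * x ^ 2).factorization p = 2 * x.factorization p := by
    rw [Nat.factorization_mul (by norm_num) (by positivity)]
    simp [h3]
  have hp' : (4 * p ^ (2 * n + 1)).factorization p = 2 * n + 1 := by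
    rw [Nat.factorization_mul (by norm_num) (pow_ne_zero _ hp.ne_zero)]
    simp [h4, hp.factorization_self]
  have := congrArg (·.factorization p) h
  rw [Nat.factorization_add_eq_min hp (by simp [hx.ne']) (by simp [hp.ne_zero]) (by omega), hx',
    hp', Nat.factorization_mul (by simp [hd]) hk] at this
  simp at this
  omega

theorem ordCompl_mul_sq_eq (hp : p.Prime) (hp2 : p ≠ 2) (hp3 : p ≠ 3) {x d : ℕ}
    (hx : 0 < x) (h : 3 * x ^ 2 + 4 * p ^ (2 * n + 1) = d ^ 2 * k) {β : ℕ}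
    (hxβ : x.factorization p = β) (hβn : β ≤ n) :
    ordCompl[p] k * ordCompl[p] d ^ 2 = 3 * ordCompl[p] x ^ 2 + 4 * p ^ (2 * n + 1 - 2 * β) := by
  subst hxβ
  have hv := two_mul_factorization_add_eq_min hp hp2 hp3 hx h
  rw [min_eq_left (by omega)] at hv
  rw [← Nat.ordProj_mul_ordCompl_eq_self x p, ← Nat.ordProj_mul_ordCompl_eq_self d p,
    ← Nat.ordProj_mul_ordCompl_eq_self k p] at h
  generalize x.factorization p = β at *
  generalize d.factorization p = δ at *
  generalize k.factorization p = τ at *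
  apply Nat.eq_of_mul_eq_mul_left (pow_pos hp.pos (2 * δ + τ))
  calc p ^ (2 * δ + τ) * (k / p ^ τ * (d / p ^ δ) ^ 2)
      = (p ^ δ * (d / p ^ δ)) ^ 2 * (p ^ τ * (k / p ^ τ)) := by ring
    _ = 3 * (p ^ β * (x / p ^ β)) ^ 2 + 4 * p ^ (2 * n + 1) := h.symm
    _ = p ^ (2 * δ + τ) * (3 * (x / p ^ β) ^ 2 + 4 * p ^ (2 * n + 1 - 2 * β)) := by
      rw [hv, ← pow_sub_mul_pow p (show 2 * β ≤ 2 * n + 1 by omega)]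
      ring

theorem pow_dvd_ordCompl_cross_sub_or_add (hp : p.Prime) (hp2 : p ≠ 2) (hp3 : p ≠ 3)
    {x d x' d' : ℕ} (hx : 0 < x) (hx' : 0 < x') (hd : 0 < d)
    (h : 3 * x ^ 2 + 4 * p ^ (2 * n + 1) = d ^ 2 * k)
    (h' : 3 * x' ^ 2 + 4 * p ^ (2 * n + 1) = d' ^ 2 * k) {β : ℕ}
    (hxβ : x.factorization p = β) (hx'β : x'.factorization p = β) (hβn : β ≤ n) :
    (p : ℤ) ^ (2 * n + 1 - 2 * β) ∣
        (ordCompl[p] d : ℤ) * ordCompl[p] x' - (ordCompl[p] x : ℤ) * ordCompl[p] d' ∨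
      (p : ℤ) ^ (2 * n + 1 - 2 * β) ∣
        (ordCompl[p] d : ℤ) * ordCompl[p] x' + (ordCompl[p] x : ℤ) * ordCompl[p] d' := by
  have hnd : ∀ m : ℕ, ¬p ∣ m → ¬(p : ℤ) ∣ m := fun m hm => by exact_mod_cast hm
  have hnd_prime : ∀ l : ℕ, l.Prime → p ≠ l → ¬(p : ℤ) ∣ l := fun l hl hpl =>
    hnd l fun h => hpl ((Nat.prime_dvd_prime_iff_eq hp hl).mp h)
  have hred : ∀ {x d : ℕ}, 0 < x → 3 * x ^ 2 + 4 * p ^ (2 * n + 1) = d ^ 2 * k →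
      x.factorization p = β → (ordCompl[p] k : ℤ) * (ordCompl[p] d : ℤ) ^ 2 =
        3 * (ordCompl[p] x : ℤ) ^ 2 + (p : ℤ) ^ (2 * n + 1 - 2 * β) * 4 := fun hx h hxβ => by
    rw [mul_comm _ 4]
    exact_mod_cast ordCompl_mul_sq_eq hp hp2 hp3 hx h hxβ hβn
  exact (Nat.prime_iff_prime_int.mp hp).pow_dvd_sub_or_pow_dvd_add
    (hnd_prime 2 Nat.prime_two hp2) (hnd_prime 3 Nat.prime_three hp3)
    (hnd _ (Nat.not_dvd_ordCompl hp hd.ne')) (hnd _ (Nat.not_dvd_ordCompl hp hx'.ne'))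
    (hred hx h hxβ) (hred hx' h' hx'β)

/-- The condition on `m` gives `(p ^ m)² k ≥ p^(4n+2)`, which is what makes `mul_sq_le_of_sq_eq`
(with `L₀ = p ^ m`, `N = 4 p^(2n+1)`) force `16 d'² ≥ 19 d²`. -/
def CrossDvd (p n k : ℕ) (s t : ℕ × ℕ) : Prop :=
  ∃ m : ℕ, 4 * n + 2 ≤ 2 * m + k.factorization p ∧ (p : ℤ) ^ m ∣ (s.2 * t.1 - s.1 * t.2 : ℤ)

theorem sq_le_of_crossDvd (hp : 0 < p) {x d x' d' : ℕ} (hx' : 0 < x') (hd : 0 < d)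
    (hdd' : d < d') (h : 3 * x ^ 2 + 4 * p ^ (2 * n + 1) = d ^ 2 * k)
    (h' : 3 * x' ^ 2 + 4 * p ^ (2 * n + 1) = d' ^ 2 * k) (hc : CrossDvd p n k (x, d) (x', d')) :
    19 * d ^ 2 ≤ 16 * d' ^ 2 := by
  obtain ⟨m, hm, hdvd⟩ := hc
  have hk : k ≠ 0 := (ne_zero_and_ne_zero_of_eq hx' h').2
  have hpk : p ^ (4 * n + 2) ≤ (p ^ m) ^ 2 * k :=
    calc p ^ (4 * n + 2) ≤ p ^ (2 * m + k.factorization p) := Nat.pow_le_pow_right hp hm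
      _ = (p ^ m) ^ 2 * p ^ k.factorization p := by ring
      _ ≤ (p ^ m) ^ 2 * k := Nat.mul_le_mul_left _ (Nat.ordProj_le p hk)
  have hpkZ : ((p : ℤ) ^ (2 * n + 1)) ^ 2 ≤ ((p : ℤ) ^ m) ^ 2 * k := by
    rw [← pow_mul, show (2 * n + 1) * 2 = 4 * n + 2 by ring]
    exact_mod_cast hpk
  have hZ : (k : ℤ) * d ^ 2 = 3 * x ^ 2 + 4 * p ^ (2 * n + 1) := by
    rw [mul_comm]; exact_mod_cast h.symm
  have hZ' : (k : ℤ) * d' ^ 2 = 3 * x' ^ 2 + 4 * p ^ (2 * n + 1) := by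
    rw [mul_comm]; exact_mod_cast h'.symm
  have hgap := mul_sq_le_of_sq_eq (by norm_num) (by positivity) (Nat.cast_nonneg x)
    (by exact_mod_cast hx') (by exact_mod_cast hd) (by exact_mod_cast hdd') hZ hZ' hdvd
  have hdd'Z : (0 : ℤ) ≤ d' ^ 2 - d ^ 2 := sub_nonneg.mpr (by gcongr)
  have key : ((p : ℤ) ^ m) ^ 2 * k * (3 * d ^ 2) ≤ ((p : ℤ) ^ m) ^ 2 * k * (16 * (d' ^ 2 - d ^ 2)) :=
    calc ((p : ℤ) ^ m) ^ 2 * k * (3 * d ^ 2) = 3 * ((p : ℤ) ^ m) ^ 2 * k * d ^ 2 := by ring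
      _ ≤ (4 * (p : ℤ) ^ (2 * n + 1)) ^ 2 * (d' ^ 2 - d ^ 2) := hgap
      _ = 16 * ((p : ℤ) ^ (2 * n + 1)) ^ 2 * (d' ^ 2 - d ^ 2) := by ring
      _ ≤ 16 * (((p : ℤ) ^ m) ^ 2 * k) * (d' ^ 2 - d ^ 2) := by gcongr
      _ = ((p : ℤ) ^ m) ^ 2 * k * (16 * (d' ^ 2 - d ^ 2)) := by ring
  have := le_of_mul_le_mul_left key (by positivity)
  zify
  linarith

theorem crossDvd_of_lt_factorization (hp : p.Prime) (hp2 : p ≠ 2) (hp3 : p ≠ 3)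
    {x d x' d' : ℕ} (hx : 0 < x) (hx' : 0 < x') (h : 3 * x ^ 2 + 4 * p ^ (2 * n + 1) = d ^ 2 * k)
    (h' : 3 * x' ^ 2 + 4 * p ^ (2 * n + 1) = d' ^ 2 * k)
    (hxn : n < x.factorization p) (hx'n : n < x'.factorization p) :
    CrossDvd p n k (x, d) (x', d') := by
  have hv := two_mul_factorization_add_eq_min hp hp2 hp3 hx h
  have hv' := two_mul_factorization_add_eq_min hp hp2 hp3 hx' h'
  rw [min_eq_right (by omega)] at hv hv'
  have hδ : d'.factorization p = d.factorization p := by omega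
  refine ⟨d.factorization p + (n + 1), by omega, ?_⟩
  have hdx' : p ^ (d.factorization p + (n + 1)) ∣ d * x' := by
    rw [pow_add]
    exact mul_dvd_mul (Nat.ordProj_dvd d p) ((pow_dvd_pow p hx'n).trans (Nat.ordProj_dvd x' p))
  have hxd' : p ^ (d.factorization p + (n + 1)) ∣ x * d' := by
    rw [pow_add, mul_comm (p ^ _)]
    exact mul_dvd_mul ((pow_dvd_pow p hxn).trans (Nat.ordProj_dvd x p)) (hδ ▸ Nat.ordProj_dvd d' p)
  have := dvd_sub (Int.natCast_dvd_natCast.mpr hdx') (Int.natCast_dvd_natCast.mpr hxd')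
  push_cast at this
  exact this

theorem crossDvd_of_pow_dvd_ordCompl_cross (hp : p.Prime) (hp2 : p ≠ 2) (hp3 : p ≠ 3)
    {x d x' d' : ℕ} (hx : 0 < x) (hx' : 0 < x') (h : 3 * x ^ 2 + 4 * p ^ (2 * n + 1) = d ^ 2 * k)
    (h' : 3 * x' ^ 2 + 4 * p ^ (2 * n + 1) = d' ^ 2 * k)
    {β : ℕ} (hxβ : x.factorization p = β) (hx'β : x'.factorization p = β) (hβn : β ≤ n)
    (hdvd : (p : ℤ) ^ (2 * n + 1 - 2 * β) ∣
      (ordCompl[p] d : ℤ) * ordCompl[p] x' - (ordCompl[p] x : ℤ) * ordCompl[p] d') :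
    CrossDvd p n k (x, d) (x', d') := by
  have hv := two_mul_factorization_add_eq_min hp hp2 hp3 hx h
  have hv' := two_mul_factorization_add_eq_min hp hp2 hp3 hx' h'
  rw [min_eq_left (by omega)] at hv hv'
  have hδ : d'.factorization p = d.factorization p := by omega
  refine ⟨β + d.factorization p + (2 * n + 1 - 2 * β), by omega, ?_⟩
  have hcross : (d : ℤ) * x' - x * d' = (p : ℤ) ^ (β + d.factorization p) *
      ((ordCompl[p] d : ℤ) * ordCompl[p] x' - (ordCompl[p] x : ℤ) * ordCompl[p] d') := by
    conv_lhs => rw [← Nat.ordProj_mul_ordCompl_eq_self d p,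
      ← Nat.ordProj_mul_ordCompl_eq_self x' p, ← Nat.ordProj_mul_ordCompl_eq_self x p,
      ← Nat.ordProj_mul_ordCompl_eq_self d' p]
    push_cast
    rw [hxβ, hx'β, hδ]
    ring
  rw [hcross, pow_add]
  exact mul_dvd_mul_left _ hdvd

def IsSolution (p n k : ℕ) (y : ℝ) (s : ℕ × ℕ) : Prop :=
  1 ≤ s.1 ∧ 1 ≤ s.2 ∧ 3 * s.1 ^ 2 + 4 * p ^ (2 * n + 1) = s.2 ^ 2 * k ∧
    ((s.2 ^ 2 * k : ℕ) : ℝ) ≤ y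

namespace IsSolution

variable {y : ℝ} {s t : ℕ × ℕ}

theorem eq_of_snd_eq (hs : IsSolution p n k y s) (ht : IsSolution p n k y t) (h : s.2 = t.2) :
    s = t := by
  have : s.1 ^ 2 = t.1 ^ 2 := by
    have := hs.2.2.1
    have := ht.2.2.1
    rw [h] at *
    omega
  exact Prod.ext (Nat.pow_left_injective two_ne_zero this) h

theorem le_sq_snd_mul (hs : IsSolution p n k y s) : s.1 ≤ s.2 ^ 2 * k ∧ s.2 ≤ s.2 ^ 2 * k := by
  obtain ⟨hx, -, h, -⟩ := hs
  have hk := (ne_zero_and_ne_zero_of_eq hx h).2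
  exact ⟨(Nat.le_self_pow two_ne_zero _).trans (by omega),
    (Nat.le_self_pow two_ne_zero _).trans (Nat.le_mul_of_pos_right _ (Nat.pos_of_ne_zero hk))⟩

theorem sq_snd_le (hs : IsSolution p n k y s) : (s.2 : ℝ) ^ 2 ≤ y := by
  obtain ⟨hx, -, h, hy⟩ := hs
  have hk := (ne_zero_and_ne_zero_of_eq hx h).2
  calc (s.2 : ℝ) ^ 2 ≤ ((s.2 ^ 2 * k : ℕ) : ℝ) := by
        exact_mod_cast Nat.le_mul_of_pos_right _ (Nat.pos_of_ne_zero hk)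
    _ ≤ y := hy

theorem mem_range_floor (hs : IsSolution p n k y s) :
    s ∈ range (⌊y⌋₊ + 1) ×ˢ range (⌊y⌋₊ + 1) := by
  have hle : ∀ m ≤ s.2 ^ 2 * k, m < ⌊y⌋₊ + 1 := fun m hm =>
    Nat.lt_succ_of_le (Nat.le_floor (le_trans (by exact_mod_cast hm) hs.2.2.2))
  simp only [mem_product, mem_range]
  exact ⟨hle _ hs.le_sq_snd_mul.1, hle _ hs.le_sq_snd_mul.2⟩

theorem add_two_le_log (hp5 : 5 ≤ p) (hs : IsSolution p n k y s) : (n : ℝ) + 2 ≤ Real.log y := by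
  obtain ⟨-, -, h, hy⟩ := hs
  have h3 : 3 ^ (n + 2) ≤ s.2 ^ 2 * k :=
    calc 3 ^ (n + 2) = 9 * 3 ^ n := by ring
      _ ≤ 20 * 25 ^ n := by gcongr <;> norm_num
      _ = 4 * 5 ^ (2 * n + 1) := by rw [pow_succ, pow_mul]; ring
      _ ≤ 4 * p ^ (2 * n + 1) := by gcongr
      _ ≤ s.2 ^ 2 * k := h ▸ Nat.le_add_left _ _
  have h3y : (3 : ℝ) ^ (n + 2) ≤ y := le_trans (by exact_mod_cast h3) hy
  have := Real.log_le_log (by positivity) h3y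
  rw [Real.log_pow] at this
  push_cast at this
  nlinarith [Real.one_le_log_of_three_le (le_refl 3)]

end IsSolution

theorem card_le_of_crossDvd (hp : 0 < p) {y : ℝ} (hy : 3 ≤ y) {C : Finset (ℕ × ℕ)}
    (hC : ∀ s ∈ C, IsSolution p n k y s) (hcross : ∀ s ∈ C, ∀ t ∈ C, CrossDvd p n k s t) :
    (C.card : ℝ) ≤ 8 * Real.log y := by
  have hinj : Set.InjOn (fun s : ℕ × ℕ => (s.2 : ℝ) ^ 2) C := fun s hs t ht hst =>
    (hC s hs).eq_of_snd_eq (hC t ht) (by simpa using hst)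
  have hlog := Real.one_le_log_of_three_le hy
  have hlog1916 : 3 / 19 ≤ Real.log (19 / 16) := by
    have := Real.one_sub_inv_le_log_of_pos (x := 19 / 16) (by norm_num)
    norm_num at this ⊢
    linarith
  rw [← card_image_of_injOn hinj]
  refine (card_le_logb_add_one_of_mul_le (r := 19 / 16) (y := y) (by norm_num) (by linarith)
    ?_ ?_ ?_).trans ?_
  · simp only [mem_image]
    rintro _ ⟨s, hs, rfl⟩
    exact one_le_pow₀ (by exact_mod_cast (hC s hs).2.1)
  · simp only [mem_image]
    rintro _ ⟨s, hs, rfl⟩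
    exact (hC s hs).sq_snd_le
  · simp only [mem_image]
    rintro _ ⟨s, hs, rfl⟩ _ ⟨t, ht, rfl⟩ hst
    have hlt : s.2 < t.2 := by exact_mod_cast lt_of_pow_lt_pow_left₀ 2 (Nat.cast_nonneg _) hst
    have := sq_le_of_crossDvd hp (hC t ht).1 (hC s hs).2.1 hlt (hC s hs).2.2.1 (hC t ht).2.2.1
      (hcross s hs t ht)
    have : (19 : ℝ) * s.2 ^ 2 ≤ 16 * t.2 ^ 2 := by exact_mod_cast this
    linarith
  · calc Real.logb (19 / 16) y + 1 ≤ Real.log y / (3 / 19) + Real.log y := by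
          rw [Real.logb]; gcongr
      _ ≤ 8 * Real.log y := by linarith

theorem card_le_of_lt_factorization (hp : p.Prime) (hp2 : p ≠ 2) (hp3 : p ≠ 3) {y : ℝ}
    (hy : 3 ≤ y) {F : Finset (ℕ × ℕ)} (hF : ∀ s ∈ F, IsSolution p n k y s)
    (hn : ∀ s ∈ F, n < s.1.factorization p) :
    (F.card : ℝ) ≤ 8 * Real.log y :=
  card_le_of_crossDvd hp.pos hy hF fun s hs t ht =>
    crossDvd_of_lt_factorization hp hp2 hp3 (hF s hs).1 (hF t ht).1 (hF s hs).2.2.1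
      (hF t ht).2.2.1 (hn s hs) (hn t ht)

theorem card_le_of_factorization_eq (hp : p.Prime) (hp2 : p ≠ 2) (hp3 : p ≠ 3) {y : ℝ}
    (hy : 3 ≤ y) {F : Finset (ℕ × ℕ)} (hF : ∀ s ∈ F, IsSolution p n k y s) {β : ℕ}
    (hβ : ∀ s ∈ F, s.1.factorization p = β) (hβn : β ≤ n) :
    (F.card : ℝ) ≤ 16 * Real.log y := by
  rcases F.eq_empty_or_nonempty with rfl | ⟨r, hr⟩
  · simpa using by linarith [Real.one_le_log_of_three_le hy]
  -- `C b`: the solutions with `X / D ≡ b / D_r` modulo `p^(2n+1-2β)`, where `X`, `D` are the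
  -- prime-to-`p` parts of `x`, `d`
  let C : ℤ → Finset (ℕ × ℕ) := fun b => F.filter fun s => (p : ℤ) ^ (2 * n + 1 - 2 * β) ∣
    (ordCompl[p] r.2 : ℤ) * ordCompl[p] s.1 - b * ordCompl[p] s.2
  have hcover : F ⊆ C (ordCompl[p] r.1) ∪ C (-(ordCompl[p] r.1 : ℤ)) := by
    intro s hs
    rcases pow_dvd_ordCompl_cross_sub_or_add hp hp2 hp3 (hF r hr).1 (hF s hs).1 (hF r hr).2.1
      (hF r hr).2.2.1 (hF s hs).2.2.1 (hβ r hr) (hβ s hs) hβn with h | h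
    · exact mem_union_left _ (mem_filter.mpr ⟨hs, h⟩)
    · exact mem_union_right _ (mem_filter.mpr ⟨hs, by rwa [neg_mul, sub_neg_eq_add]⟩)
  have hcop : IsCoprime ((p : ℤ) ^ (2 * n + 1 - 2 * β)) (ordCompl[p] r.2 : ℤ) :=
    ((Nat.prime_iff_prime_int.mp hp).coprime_iff_not_dvd.mpr
      (by exact_mod_cast Nat.not_dvd_ordCompl hp (Nat.pos_iff_ne_zero.mp (hF r hr).2.1))).pow_left
  have hC : ∀ b, ((C b).card : ℝ) ≤ 8 * Real.log y := fun b => by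
    refine card_le_of_crossDvd hp.pos hy (fun s hs => hF s (mem_filter.mp hs).1) ?_
    intro s hs t ht
    rw [mem_filter] at hs ht
    exact crossDvd_of_pow_dvd_ordCompl_cross hp hp2 hp3 (hF s hs.1).1 (hF t ht.1).1
      (hF s hs.1).2.2.1 (hF t ht.1).2.2.1 (hβ s hs.1) (hβ t ht.1) hβn
      (hcop.dvd_cross_of_dvd_cross hs.2 ht.2)
  calc (F.card : ℝ) ≤ ((C (ordCompl[p] r.1) ∪ C (-(ordCompl[p] r.1 : ℤ))).card : ℝ) := by
        exact_mod_cast card_le_card hcover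
    _ ≤ (C (ordCompl[p] r.1)).card + (C (-(ordCompl[p] r.1 : ℤ))).card := by
        exact_mod_cast card_union_le _ _
    _ ≤ 16 * Real.log y := by linarith [hC (ordCompl[p] r.1), hC (-(ordCompl[p] r.1 : ℤ))]

theorem card_filter_min_factorization_le (hp : p.Prime) (hp2 : p ≠ 2) (hp3 : p ≠ 3) {y : ℝ}
    (hy : 3 ≤ y) {T : Finset (ℕ × ℕ)} (hT : ∀ s ∈ T, IsSolution p n k y s) (β : ℕ) :
    ((T.filter fun s => min (s.1.factorization p) (n + 1) = β).card : ℝ) ≤ 16 * Real.log y := by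
  have hF : ∀ s ∈ T.filter fun s => min (s.1.factorization p) (n + 1) = β,
      IsSolution p n k y s := fun s hs => hT s (mem_filter.mp hs).1
  by_cases hβn : β ≤ n
  · exact card_le_of_factorization_eq hp hp2 hp3 hy hF
      (fun s hs => by have := (mem_filter.mp hs).2; omega) hβn
  · have := card_le_of_lt_factorization hp hp2 hp3 hy hF
      (fun s hs => by have := (mem_filter.mp hs).2; omega)
    linarith [Real.one_le_log_of_three_le hy]

/-- There is an absolute constant `C > 0` such that for every prime `p ≥ 5`, every
`n ≥ 1`, every `k ≥ 1` and every real `y ≥ 3`, the number of pairs `(x,d)` of positive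
integers with `3x² + 4p^{2n+1} = d²k ≤ y` is at most `C·(log y)²`. -/
theorem stmt_14 :
    ∃ C : ℝ, 0 < C ∧
      ∀ (p n k : ℕ) (y : ℝ), p.Prime → 5 ≤ p → 1 ≤ n → 1 ≤ k → 3 ≤ y →
        (Nat.card {xd : ℕ × ℕ // 1 ≤ xd.1 ∧ 1 ≤ xd.2 ∧
            3 * xd.1 ^ 2 + 4 * p ^ (2 * n + 1) = xd.2 ^ 2 * k ∧
            ((xd.2 ^ 2 * k : ℕ) : ℝ) ≤ y} : ℝ) ≤ C * Real.log y ^ 2 := by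
  classical
  refine ⟨16, by norm_num, fun p n k y hp hp5 _ _ hy => ?_⟩
  set T := (range (⌊y⌋₊ + 1) ×ˢ range (⌊y⌋₊ + 1)).filter (IsSolution p n k y)
  have hT : ∀ s ∈ T, IsSolution p n k y s := fun s hs => (mem_filter.mp hs).2
  have hcard : Nat.card {s // IsSolution p n k y s} = T.card := by
    rw [← Nat.card_eq_finsetCard]
    exact Nat.card_congr (Equiv.subtypeEquivRight fun s =>
      ⟨fun hs => mem_filter.mpr ⟨hs.mem_range_floor, hs⟩, hT s⟩)
  change (Nat.card {s // IsSolution p n k y s} : ℝ) ≤ _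
  rw [hcard]
  rcases T.eq_empty_or_nonempty with hTe | ⟨s, hs⟩
  · simp only [hTe, card_empty, Nat.cast_zero]
    positivity
  have hn := (hT s hs).add_two_le_log hp5
  calc (T.card : ℝ) = ∑ β ∈ range (n + 2),
        ((T.filter fun s => min (s.1.factorization p) (n + 1) = β).card : ℝ) := by
        rw [card_eq_sum_card_fiberwise (t := range (n + 2))
          fun s _ => mem_range.mpr (Nat.lt_succ_of_le (min_le_right (s.1.factorization p) _))]
        push_cast
        rfl
    _ ≤ ∑ _β ∈ range (n + 2), 16 * Real.log y := sum_le_sum fun β _ =>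
        card_filter_min_factorization_le hp (by omega) (by omega) hy hT β
    _ ≤ 16 * Real.log y ^ 2 := by
        rw [sum_const, card_range, nsmul_eq_mul]
        push_cast
        nlinarith [Real.one_le_log_of_three_le hy]
end
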